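/- arXiv:2412.10772 — 4 statements merged into one kernel-verified Lean document; each statement's English description precedes it below -/
import Mathlib

section
/- Let n ≥ 4, R > 0 and Ω = B_R ⊂ ℝⁿ. Then there exists a constant C > 0 depending only on n and R with the following property: if u ∈ C⁰(Ω̄) and w ∈ C²(Ω̄) are nonnegative radially symmetric functions satisfying −Δw + w = u in Ω, ∂_ν w = 0 on ∂Ω, and ∫_Ω u dx = m, then w(x) + |x · ∇w(x)| ≤ C m / |x|^{n−2} for all x with 0 < |x| ≤ R. -/
open MeasureTheory Metric Set Filter

noncomputable section

abbrev En (n : ℕ) := EuclideanSpace ℝ (Fin n)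

/-- partial derivative of `f` in the `i`-th coordinate direction -/
def pd {n : ℕ} (f : En n → ℝ) (i : Fin n) (x : En n) : ℝ :=
  fderiv ℝ f x (EuclideanSpace.single i 1)

/-- Laplacian of `f` -/
def lap {n : ℕ} (f : En n → ℝ) (x : En n) : ℝ :=
  ∑ i, pd (pd f i) i x

/-- `f` is radially symmetric on the closed ball of radius `R` -/
def radial {n : ℕ} (R : ℝ) (f : En n → ℝ) : Prop :=
  ∀ x ∈ closedBall (0 : En n) R, ∀ y ∈ closedBall (0 : En n) R, ‖x‖ = ‖y‖ → f x = f y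

/-!
Write `w x = φ ‖x‖` and `u x = υ ‖x‖`. In polar coordinates the equation reads
`(r^{n-1} φ')' = r^{n-1} (φ - υ)`, so the flux `r^{n-1} φ'(r)` equals `∫₀^r s^{n-1} (φ - υ)`;
since it vanishes at `r = R`, the weighted integrals of `φ` and `υ` over `[0, R]` agree, both
equal to `M = m / (n |B₁|)`. Nonnegativity then bounds the flux by `M`, which is the gradient
estimate, and integrating `|φ'| ≤ M s^{1-n}` from a point of `[R/2, R]` where
`φ ≤ M / ∫_{R/2}^R s^{n-1}` gives the bound on `w`.
-/

open Topology

section Laplacian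

variable {n : ℕ}

lemma pd_congr {f g : En n → ℝ} {x : En n} (h : f =ᶠ[𝓝 x] g) (i : Fin n) :
    pd f i x = pd g i x := by
  rw [pd, pd, h.fderiv_eq]

lemma lap_congr {f g : En n → ℝ} {x : En n} (h : f =ᶠ[𝓝 x] g) : lap f x = lap g x :=
  Finset.sum_congr rfl fun i _ => pd_congr (h.eventuallyEq_nhds.mono fun _ hy => pd_congr hy i) i

lemma HasFDerivAt.pd_eq {f : En n → ℝ} {f' : En n →L[ℝ] ℝ} {x : En n} (h : HasFDerivAt f f' x)
    (i : Fin n) : pd f i x = f' (EuclideanSpace.single i 1) := by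
  rw [pd, h.fderiv]

lemma hasFDerivAt_norm {E : Type*} [NormedAddCommGroup E] [InnerProductSpace ℝ E] {x : E}
    (hx : x ≠ 0) : HasFDerivAt (fun y : E => ‖y‖) (‖x‖⁻¹ • innerSL ℝ x) x := by
  have h := (hasStrictFDerivAt_norm_sq x).hasFDerivAt.sqrt (by positivity)
  simp only [Real.sqrt_sq (norm_nonneg _)] at h
  convert h using 1
  ext v
  simp only [smul_apply, coe_innerSL_apply, smul_eq_mul, nsmul_eq_mul,
    Nat.cast_ofNat]
  field_simp

lemma pd_comp_norm {φ : ℝ → ℝ} {y : En n} (hy : y ≠ 0) (hφ : DifferentiableAt ℝ φ ‖y‖)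
    (i : Fin n) : pd (fun z => φ ‖z‖) i y = deriv φ ‖y‖ * (‖y‖⁻¹ * y i) := by
  have h : HasFDerivAt (fun z => φ ‖z‖) _ y :=
    hφ.hasDerivAt.comp_hasFDerivAt y (hasFDerivAt_norm hy)
  rw [h.pd_eq]
  simp [EuclideanSpace.inner_single_right]

lemma pd_pd_comp_norm {φ : ℝ → ℝ} (hφ : ContDiff ℝ 2 φ) {x : En n} (hx : x ≠ 0) (i : Fin n) :
    pd (pd (fun z => φ ‖z‖) i) i x
      = deriv (deriv φ) ‖x‖ * (‖x‖⁻¹ * x i) ^ 2 + deriv φ ‖x‖ * (‖x‖⁻¹ - ‖x‖⁻¹ ^ 3 * x i ^ 2) := by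
  have hnorm := hasFDerivAt_norm hx
  have hpd : pd (fun z => φ ‖z‖) i =ᶠ[𝓝 x] fun y => deriv φ ‖y‖ * (‖y‖⁻¹ * y i) := by
    filter_upwards [isOpen_ne.mem_nhds hx] with y hy
    exact pd_comp_norm hy (hφ.differentiable (by norm_num) _) i
  rw [pd_congr hpd]
  have hx' : ‖x‖ ≠ 0 := norm_ne_zero_iff.2 hx
  have h : HasFDerivAt (fun y : En n => deriv φ ‖y‖ * (‖y‖⁻¹ * y i)) _ x :=
    ((hφ.differentiable_deriv_two ‖x‖).hasDerivAt.comp_hasFDerivAt x hnorm).mul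
      (((hasDerivAt_inv hx').comp_hasFDerivAt x hnorm).mul
        (EuclideanSpace.proj i : En n →L[ℝ] ℝ).hasFDerivAt)
  rw [h.pd_eq]
  simp only [Function.comp_apply, neg_smul, smul_neg, smul_add, add_apply,
    smul_apply, neg_apply, PiLp.proj_apply,
    PiLp.single_eq_same, coe_innerSL_apply, EuclideanSpace.inner_single_right, smul_eq_mul,
    Real.ringHom_apply, mul_one, one_mul]
  ring

lemma lap_comp_norm {φ : ℝ → ℝ} (hφ : ContDiff ℝ 2 φ) {x : En n} (hx : x ≠ 0) :
    lap (fun z => φ ‖z‖) x = deriv (deriv φ) ‖x‖ + (n - 1) / ‖x‖ * deriv φ ‖x‖ := by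
  have hx' : ‖x‖ ≠ 0 := norm_ne_zero_iff.2 hx
  have hsq : ∑ i, x i ^ 2 = ‖x‖ ^ 2 := (EuclideanSpace.real_norm_sq_eq x).symm
  simp only [lap, pd_pd_comp_norm hφ hx, Finset.sum_add_distrib, ← Finset.mul_sum, mul_pow,
    Finset.sum_sub_distrib, Finset.sum_const, Finset.card_univ, Fintype.card_fin, nsmul_eq_mul, hsq]
  field_simp

end Laplacian

section Radial

variable {n : ℕ} {R : ℝ} {w : En n → ℝ} {e : En n}

lemma norm_smul_of_norm_eq_one (he : ‖e‖ = 1) {r : ℝ} (hr : 0 ≤ r) : ‖r • e‖ = r := by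
  rw [norm_smul, he, mul_one, Real.norm_of_nonneg hr]

lemma radial.apply_eq (hw : radial R w) (he : ‖e‖ = 1) {x : En n} (hx : ‖x‖ ≤ R) :
    w x = w (‖x‖ • e) :=
  hw x (by simpa using hx) _ (by simpa [norm_smul, he] using hx) (by simp [norm_smul, he])

lemma radial.eventuallyEq_comp_norm (hw : radial R w) (he : ‖e‖ = 1) {x : En n} (hx : ‖x‖ < R) :
    w =ᶠ[𝓝 x] fun y => w (‖y‖ • e) := by
  filter_upwards [isOpen_ball.mem_nhds (mem_ball_zero_iff.2 hx)] with y hy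
  exact hw.apply_eq he (mem_ball_zero_iff.1 hy).le

lemma radial.lap_smul_eq (hw : radial R w) (hw2 : ContDiff ℝ 2 w) (he : ‖e‖ = 1) {r : ℝ}
    (hr : r ∈ Ioo 0 R) :
    lap w (r • e)
      = deriv (deriv fun s => w (s • e)) r + (n - 1) / r * deriv (fun s => w (s • e)) r := by
  have hre := norm_smul_of_norm_eq_one he hr.1.le
  have h := (lap_congr (hw.eventuallyEq_comp_norm he (hre.trans_lt hr.2))).trans
    (lap_comp_norm (hw2.comp (contDiff_id.smul contDiff_const))
      (norm_pos_iff.1 (hre.symm ▸ hr.1 : 0 < ‖r • e‖)))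
  rwa [hre] at h

lemma radial.inner_gradient (hw : radial R w) (hdw : Differentiable ℝ w) (he : ‖e‖ = 1)
    {x : En n} (hx : ‖x‖ ≤ R) :
    inner ℝ x (gradient w x) = ‖x‖ * deriv (fun r => w (r • e)) ‖x‖ := by
  have hray : HasDerivAt (fun t : ℝ => w (t • x)) (fderiv ℝ w x x) 1 := by
    have h := (hdw ((1 : ℝ) • x)).hasFDerivAt.comp_hasDerivAt 1
      ((hasDerivAt_id (1 : ℝ)).smul_const x)
    simpa [Function.comp_def] using h
  have hprofile : HasDerivAt (fun t : ℝ => w ((t * ‖x‖) • e))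
      (deriv (fun r => w (r • e)) ‖x‖ * ‖x‖) 1 := by
    have hφ : HasDerivAt (fun r : ℝ => w (r • e)) (deriv (fun r => w (r • e)) ‖x‖) (1 * ‖x‖) := by
      rw [one_mul]
      exact (hdw.comp (differentiable_id.smul_const e) _).hasDerivAt
    exact hφ.comp (1 : ℝ) (by simpa using (hasDerivAt_id (1 : ℝ)).mul_const ‖x‖)
  -- `w` is radial only on the closed ball, so the two rays are compared to the left of `t = 1`.
  have heq : (fun t : ℝ => w (t • x)) =ᶠ[𝓝[≤] 1] fun t => w ((t * ‖x‖) • e) := by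
    filter_upwards [Icc_mem_nhdsLE (zero_lt_one' ℝ)] with t ht
    rw [hw.apply_eq he (x := t • x)]
    · rw [norm_smul, Real.norm_of_nonneg ht.1]
    · rw [norm_smul, Real.norm_of_nonneg ht.1]
      exact (mul_le_of_le_one_left (norm_nonneg x) ht.2).trans hx
  rw [real_inner_comm, gradient, InnerProductSpace.toDual_symm_apply, mul_comm,
    (uniqueDiffWithinAt_Iic 1).eq_deriv _ hray.hasDerivWithinAt
      (hprofile.hasDerivWithinAt.congr_of_eventuallyEq heq (by simpa using hw.apply_eq he hx))]

lemma radial.deriv_smul_eq_zero_of_inner_gradient (hw : radial R w) (hdw : Differentiable ℝ w)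
    (he : ‖e‖ = 1) (hR : 0 < R) (hneu : inner ℝ (gradient w (R • e)) (R • e) = 0) :
    deriv (fun r => w (r • e)) R = 0 := by
  have hRe := norm_smul_of_norm_eq_one he hR.le
  have h := hw.inner_gradient hdw he hRe.le
  rw [real_inner_comm, hneu, hRe] at h
  exact (mul_eq_zero.1 h.symm).resolve_left hR.ne'

lemma radial.setIntegral_ball (hw : radial R w) (hR : 0 ≤ R) (he : ‖e‖ = 1) :
    ∫ x in ball (0 : En n) R, w x
      = n * volume.real (ball (0 : En n) 1) * ∫ s in 0..R, s ^ (n - 1) * w (s • e) := by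
  have hind : ∀ x : En n,
      (ball 0 R).indicator w x = (Iio R).indicator (fun r => w (r • e)) ‖x‖ := by
    intro x
    by_cases hx : ‖x‖ < R
    · rw [indicator_of_mem (mem_ball_zero_iff.2 hx), indicator_of_mem (show ‖x‖ ∈ Iio R from hx),
        hw.apply_eq he hx.le]
    · rw [indicator_of_notMem (by simpa using hx), indicator_of_notMem (show ‖x‖ ∉ Iio R from hx)]
  have hpow : ∀ y : ℝ, y ^ (n - 1) • (Iio R).indicator (fun r => w (r • e)) y
      = (Iio R).indicator (fun r => r ^ (n - 1) * w (r • e)) y := by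
    intro y
    by_cases hy : y < R <;> simp [hy]
  have : Nontrivial (En n) := ⟨⟨e, 0, by rintro rfl; simp at he⟩⟩
  rw [← integral_indicator measurableSet_ball, funext hind, integral_fun_norm_addHaar,
    finrank_euclideanSpace_fin, funext hpow, setIntegral_indicator measurableSet_Iio, Ioi_inter_Iio,
    intervalIntegral.integral_of_le hR, integral_Ioc_eq_integral_Ioo, nsmul_eq_mul, smul_eq_mul,
    mul_assoc]

end Radial

lemma integral_le_integral_of_subinterval {f : ℝ → ℝ} {a b c d : ℝ} (hca : c ≤ a) (hab : a ≤ b)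
    (hbd : b ≤ d) (hf : ContinuousOn f (Icc c d)) (hf0 : ∀ s ∈ Icc c d, 0 ≤ f s) :
    ∫ s in a..b, f s ≤ ∫ s in c..d, f s :=
  intervalIntegral.integral_mono_interval hca hab hbd
    (by filter_upwards [ae_restrict_mem measurableSet_Ioc] with s hs
        using hf0 s (Ioc_subset_Icc_self hs))
    (hf.intervalIntegrable_of_Icc ((hca.trans hab).trans hbd))

lemma exists_integral_mul_le_integral_mul {f g : ℝ → ℝ} {a b : ℝ} (hab : a ≤ b)
    (hf : ContinuousOn f (Icc a b)) (hg : ContinuousOn g (Icc a b))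
    (hg0 : ∀ s ∈ Icc a b, 0 ≤ g s) :
    ∃ ρ ∈ Icc a b, (∫ s in a..b, g s) * f ρ ≤ ∫ s in a..b, g s * f s := by
  obtain ⟨ρ, hρ, hmin⟩ := isCompact_Icc.exists_isMinOn (nonempty_Icc.2 hab) hf
  refine ⟨ρ, hρ, ?_⟩
  rw [← intervalIntegral.integral_mul_const]
  exact intervalIntegral.integral_mono_on hab
    ((hg.mul continuousOn_const).intervalIntegrable_of_Icc hab)
    ((hg.mul hf).intervalIntegrable_of_Icc hab)
    fun s hs => mul_le_mul_of_nonneg_left (hmin hs) (hg0 s hs)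

section RadialODE

variable {n : ℕ} {R : ℝ} {φ υ : ℝ → ℝ}

lemma flux_eq_integral (hn : 2 ≤ n) (hφ : ContDiff ℝ 2 φ) (hυ : ContinuousOn υ (Icc 0 R))
    (hode : ∀ r ∈ Ioo 0 R, deriv (deriv φ) r + (n - 1) / r * deriv φ r = φ r - υ r)
    {r : ℝ} (hr : r ∈ Icc 0 R) :
    r ^ (n - 1) * deriv φ r = ∫ s in 0..r, s ^ (n - 1) * (φ s - υ s) := by
  have hφ' := hφ.differentiable_deriv_two
  have hderiv : ∀ s ∈ Ioo 0 r,
      HasDerivAt (fun s => s ^ (n - 1) * deriv φ s) (s ^ (n - 1) * (φ s - υ s)) s := by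
    intro s hs
    rw [← hode s ⟨hs.1, hs.2.trans_le hr.2⟩]
    refine ((hasDerivAt_pow (n - 1) s).mul
      (hφ' s).hasDerivAt).congr_deriv ?_
    have hs0 : s ≠ 0 := hs.1.ne'
    rw [show s ^ (n - 1) = s ^ (n - 1 - 1) * s by rw [← pow_succ]; congr 1; omega,
      Nat.cast_sub (by omega : 1 ≤ n)]
    field_simp
    ring
  have hint : IntervalIntegrable (fun s => s ^ (n - 1) * (φ s - υ s)) volume 0 r :=
    ((continuous_pow _).continuousOn.mul (hφ.continuous.continuousOn.sub
      (hυ.mono (Icc_subset_Icc le_rfl hr.2)))).intervalIntegrable_of_Icc hr.1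
  rw [intervalIntegral.integral_eq_sub_of_hasDeriv_right_of_le hr.1
    ((continuous_pow _).mul hφ'.continuous).continuousOn
    (fun s hs => (hderiv s hs).hasDerivWithinAt) hint]
  simp [zero_pow (by omega : n - 1 ≠ 0)]

lemma integral_pow_mul_eq_of_deriv_eq_zero (hn : 2 ≤ n) (hR : 0 ≤ R) (hφ : ContDiff ℝ 2 φ)
    (hυ : ContinuousOn υ (Icc 0 R))
    (hode : ∀ r ∈ Ioo 0 R, deriv (deriv φ) r + (n - 1) / r * deriv φ r = φ r - υ r)
    (hneu : deriv φ R = 0) :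
    ∫ s in 0..R, s ^ (n - 1) * φ s = ∫ s in 0..R, s ^ (n - 1) * υ s := by
  have h := flux_eq_integral hn hφ hυ hode ⟨hR, le_rfl⟩
  simp_rw [hneu, mul_zero, mul_sub] at h
  have hf : IntervalIntegrable (fun s => s ^ (n - 1) * φ s) volume 0 R :=
    ((continuous_pow _).mul hφ.continuous).intervalIntegrable _ _
  have hg : IntervalIntegrable (fun s => s ^ (n - 1) * υ s) volume 0 R :=
    ((continuous_pow _).continuousOn.mul hυ).intervalIntegrable_of_Icc hR
  rw [intervalIntegral.integral_sub hf hg] at h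
  linarith

lemma abs_flux_le (hn : 2 ≤ n) (hφ : ContDiff ℝ 2 φ) (hυ : ContinuousOn υ (Icc 0 R))
    (hnn : ∀ s ∈ Icc 0 R, 0 ≤ φ s ∧ 0 ≤ υ s)
    (hode : ∀ r ∈ Ioo 0 R, deriv (deriv φ) r + (n - 1) / r * deriv φ r = φ r - υ r)
    (hneu : deriv φ R = 0) {r : ℝ} (hr : r ∈ Icc 0 R) :
    |r ^ (n - 1) * deriv φ r| ≤ ∫ s in 0..R, s ^ (n - 1) * υ s := by
  have hR : 0 ≤ R := hr.1.trans hr.2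
  have hf : ContinuousOn (fun s => s ^ (n - 1) * φ s) (Icc 0 R) :=
    ((continuous_pow _).mul hφ.continuous).continuousOn
  have hg : ContinuousOn (fun s => s ^ (n - 1) * υ s) (Icc 0 R) :=
    (continuous_pow _).continuousOn.mul hυ
  have hf0 : ∀ s ∈ Icc 0 R, 0 ≤ s ^ (n - 1) * φ s :=
    fun s hs => mul_nonneg (pow_nonneg hs.1 _) (hnn s hs).1
  have hg0 : ∀ s ∈ Icc 0 R, 0 ≤ s ^ (n - 1) * υ s :=
    fun s hs => mul_nonneg (pow_nonneg hs.1 _) (hnn s hs).2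
  have hsub : Icc 0 r ⊆ Icc 0 R := Icc_subset_Icc le_rfl hr.2
  rw [flux_eq_integral hn hφ hυ hode hr]
  simp_rw [mul_sub]
  have hfi : IntervalIntegrable (fun s => s ^ (n - 1) * φ s) volume 0 r :=
    (hf.mono hsub).intervalIntegrable_of_Icc hr.1
  have hgi : IntervalIntegrable (fun s => s ^ (n - 1) * υ s) volume 0 r :=
    (hg.mono hsub).intervalIntegrable_of_Icc hr.1
  rw [intervalIntegral.integral_sub hfi hgi]
  have hbal := integral_pow_mul_eq_of_deriv_eq_zero hn hR hφ hυ hode hneu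
  have hf_le := integral_le_integral_of_subinterval le_rfl hr.1 hr.2 hf hf0
  have hg_le := integral_le_integral_of_subinterval le_rfl hr.1 hr.2 hg hg0
  have hf_nn := intervalIntegral.integral_nonneg (μ := volume) hr.1 fun s hs => hf0 s (hsub hs)
  have hg_nn := intervalIntegral.integral_nonneg (μ := volume) hr.1 fun s hs => hg0 s (hsub hs)
  rw [abs_le]
  constructor <;> linarith

lemma abs_sub_le_of_abs_flux_le (hn : 3 ≤ n) (hφ : Differentiable ℝ φ) {M a b : ℝ} (ha : 0 < a)
    (hab : a ≤ b) (hflux : ∀ s ∈ Icc a b, |s ^ (n - 1) * deriv φ s| ≤ M) :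
    |φ b - φ a| ≤ M / ((n - 2) * a ^ (n - 2)) := by
  have hM : 0 ≤ M := (abs_nonneg _).trans (hflux a (left_mem_Icc.2 hab))
  have hn2 : (0 : ℝ) < n - 2 := by
    have : (3 : ℝ) ≤ n := by exact_mod_cast hn
    linarith
  set B : ℝ → ℝ := fun s => M / (n - 2) * ((a ^ (n - 2))⁻¹ - (s ^ (n - 2))⁻¹)
  have hB : ∀ s ∈ Icc a b, HasDerivAt B (M / s ^ (n - 1)) s := by
    intro s hs
    have hs0 : s ≠ 0 := (ha.trans_le hs.1).ne'
    refine (((hasDerivAt_pow (n - 2) s).inv (pow_ne_zero _ hs0)).const_sub _ |>.const_mul _)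
      |>.congr_deriv ?_
    rw [Nat.cast_sub (by omega : 2 ≤ n),
      show (s ^ (n - 2)) ^ 2 = s ^ (n - 2 - 1) * s ^ (n - 1) by
        rw [← pow_mul, ← pow_add]; congr 1; omega]
    field_simp
    push_cast
    ring
  have hbound := image_norm_le_of_norm_deriv_right_le_deriv_boundary'
    (f := fun s => φ s - φ a) (hφ.continuous.sub continuous_const).continuousOn
    (fun s _ => ((hφ s).hasDerivAt.sub_const (φ a)).hasDerivWithinAt) (by simp [B])
    (fun s hs => (hB s hs).continuousAt.continuousWithinAt)
    (fun s hs => (hB s (Ico_subset_Icc_self hs)).hasDerivWithinAt)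
    (fun s hs => by
      have hs0 : 0 < s := ha.trans_le hs.1
      rw [Real.norm_eq_abs, le_div_iff₀ (pow_pos hs0 _), mul_comm, ← abs_of_pos (pow_pos hs0 _),
        ← abs_mul]
      exact hflux s (Ico_subset_Icc_self hs))
    (right_mem_Icc.2 hab)
  calc |φ b - φ a| ≤ B b := hbound
    _ ≤ M / (n - 2) * (a ^ (n - 2))⁻¹ := by
      have : 0 ≤ (b ^ (n - 2))⁻¹ := inv_nonneg.2 (pow_nonneg (ha.le.trans hab) _)
      simp only [B]
      gcongr
      linarith
    _ = M / ((n - 2) * a ^ (n - 2)) := by field_simp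

lemma le_add_of_abs_flux_le (hn : 3 ≤ n) (hφ : Differentiable ℝ φ) {M : ℝ}
    (hflux : ∀ s ∈ Ioc 0 R, |s ^ (n - 1) * deriv φ s| ≤ M) {r ρ : ℝ} (hr : r ∈ Ioc 0 R)
    (hρ : ρ ∈ Icc (R / 2) R) :
    φ r ≤ φ ρ + 2 ^ (n - 2) * M / ((n - 2) * r ^ (n - 2)) := by
  have hM : 0 ≤ M := (abs_nonneg _).trans (hflux r hr)
  have hr0 : 0 < r := hr.1
  have hn2 : (0 : ℝ) < n - 2 := by
    have : (3 : ℝ) ≤ n := by exact_mod_cast hn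
    linarith
  have hsub : ∀ a b, 0 < a → a ≤ b → b ≤ R → |φ b - φ a| ≤ M / ((n - 2) * a ^ (n - 2)) :=
    fun a b ha hab hb => abs_sub_le_of_abs_flux_le hn hφ ha hab
      fun s hs => hflux s ⟨ha.trans_le hs.1, hs.2.trans hb⟩
  rcases le_total r ρ with h | h
  · have hrρ := (abs_sub_comm _ _).trans_le (hsub r ρ hr.1 h hρ.2)
    calc φ r ≤ φ ρ + M / ((n - 2) * r ^ (n - 2)) := by linarith [le_abs_self (φ r - φ ρ)]
      _ ≤ φ ρ + 2 ^ (n - 2) * M / ((n - 2) * r ^ (n - 2)) := by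
        gcongr
        exact le_mul_of_one_le_left hM (one_le_pow₀ one_le_two)
  · have hρ0 : 0 < ρ := by linarith [hρ.1, hr.1, hr.2]
    have hρr := hsub ρ r hρ0 h hr.2
    calc φ r ≤ φ ρ + M / ((n - 2) * ρ ^ (n - 2)) := by linarith [le_abs_self (φ r - φ ρ)]
      _ = φ ρ + 2 ^ (n - 2) * M / ((n - 2) * (2 * ρ) ^ (n - 2)) := by
        rw [mul_pow]
        field_simp
      _ ≤ φ ρ + 2 ^ (n - 2) * M / ((n - 2) * r ^ (n - 2)) := by
        gcongr
        linarith [hρ.1, hr.2]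

theorem exists_bound_of_neumann_radial_ode (hn : 3 ≤ n) (hR : 0 < R) :
    ∃ K > 0, ∀ φ υ : ℝ → ℝ, ContDiff ℝ 2 φ → ContinuousOn υ (Icc 0 R) →
      (∀ s ∈ Icc 0 R, 0 ≤ φ s ∧ 0 ≤ υ s) →
      (∀ r ∈ Ioo 0 R, deriv (deriv φ) r + (n - 1) / r * deriv φ r = φ r - υ r) →
      deriv φ R = 0 →
      ∀ r ∈ Ioc 0 R,
        φ r + r * |deriv φ r| ≤ K * (∫ s in 0..R, s ^ (n - 1) * υ s) / r ^ (n - 2) := by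
  set I := ∫ s in R / 2..R, s ^ (n - 1)
  have hI : 0 < I := intervalIntegral.intervalIntegral_pos_of_pos_on
    ((continuous_pow _).intervalIntegrable _ _) (fun s hs => pow_pos (by linarith [hs.1]) _)
    (by linarith)
  have hn2 : (0 : ℝ) < n - 2 := by
    have : (3 : ℝ) ≤ n := by exact_mod_cast hn
    linarith
  refine ⟨R ^ (n - 2) / I + 2 ^ (n - 2) / (n - 2) + 1, by positivity, ?_⟩
  intro φ υ hφ hυ hnn hode hneu r hr
  set M := ∫ s in 0..R, s ^ (n - 1) * υ s
  have hflux : ∀ s ∈ Icc 0 R, |s ^ (n - 1) * deriv φ s| ≤ M :=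
    fun s hs => abs_flux_le (by omega) hφ hυ hnn hode hneu hs
  obtain ⟨ρ, hρ, hρI⟩ := exists_integral_mul_le_integral_mul (by linarith : R / 2 ≤ R)
    hφ.continuous.continuousOn (continuous_pow (n - 1)).continuousOn
    (fun s hs => pow_nonneg (by linarith [hs.1]) _)
  have hρM : φ ρ ≤ M / I := by
    rw [le_div_iff₀' hI]
    calc I * φ ρ ≤ ∫ s in R / 2..R, s ^ (n - 1) * φ s := hρI
      _ ≤ ∫ s in 0..R, s ^ (n - 1) * φ s :=
        integral_le_integral_of_subinterval (by linarith) (by linarith) le_rfl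
          ((continuous_pow _).mul hφ.continuous).continuousOn
          fun s hs => mul_nonneg (pow_nonneg hs.1 _) (hnn s hs).1
      _ = M := integral_pow_mul_eq_of_deriv_eq_zero (by omega) hR.le hφ hυ hode hneu
  have hφr := le_add_of_abs_flux_le hn (hφ.differentiable (by norm_num))
    (fun s hs => hflux s (Ioc_subset_Icc_self hs)) hr hρ
  have hr0 := hr.1
  have hM : 0 ≤ M := (abs_nonneg _).trans (hflux r (Ioc_subset_Icc_self hr))
  have hgrad : r * |deriv φ r| ≤ M / r ^ (n - 2) := by
    rw [le_div_iff₀ (by positivity)]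
    calc r * |deriv φ r| * r ^ (n - 2) = |r ^ (n - 1) * deriv φ r| := by
          rw [abs_mul, abs_of_pos (pow_pos hr0 _),
            show n - 1 = n - 2 + 1 by omega, pow_succ]
          ring
      _ ≤ M := hflux r (Ioc_subset_Icc_self hr)
  have hMI : M / I ≤ R ^ (n - 2) / I * M / r ^ (n - 2) := by
    rw [le_div_iff₀ (by positivity)]
    calc M / I * r ^ (n - 2) ≤ M / I * R ^ (n - 2) := by
          gcongr
          exact hr.2
      _ = R ^ (n - 2) / I * M := by ring
  calc φ r + r * |deriv φ r|
      ≤ R ^ (n - 2) / I * M / r ^ (n - 2) + 2 ^ (n - 2) * M / ((n - 2) * r ^ (n - 2))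
        + M / r ^ (n - 2) := by linarith
    _ = (R ^ (n - 2) / I + 2 ^ (n - 2) / (n - 2) + 1) * M / r ^ (n - 2) := by
      field_simp

end RadialODE

/-- **Pointwise estimate for the indirect signal.** Let `n ≥ 4`, `R > 0`,
`Ω = B_R ⊂ ℝⁿ`. There is `C > 0`, depending only on `n` and `R`, such that
whenever `u ∈ C⁰(Ω̄)`, `w ∈ C²(Ω̄)` are nonnegative and radially symmetric
with `-Δw + w = u` in `Ω`, `∂_ν w = 0` on `∂Ω` and `∫_Ω u = m`, then
`w(x) + |x·∇w(x)| ≤ C m / |x|^{n-2}` for all `0 < |x| ≤ R`. -/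
theorem pointwise_estimate_w
    (n : ℕ) (hn : 4 ≤ n) (R : ℝ) (hR : 0 < R) :
    ∃ C > (0 : ℝ), ∀ (m : ℝ) (u w : En n → ℝ),
      ContinuousOn u (closedBall (0 : En n) R) →
      ContDiff ℝ 2 w →
      (∀ x ∈ closedBall (0 : En n) R, 0 ≤ u x ∧ 0 ≤ w x) →
      radial R u → radial R w →
      (∀ x ∈ ball (0 : En n) R, -lap w x + w x = u x) →
      (∀ x : En n, ‖x‖ = R → (inner ℝ (gradient w x) x : ℝ) = 0) →
      (∫ x in ball (0 : En n) R, u x) = m →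
      ∀ x : En n, 0 < ‖x‖ → ‖x‖ ≤ R →
        w x + |(inner ℝ x (gradient w x) : ℝ)| ≤ C * m / ‖x‖ ^ ((n : ℝ) - 2) := by
  obtain ⟨K, hK, hbound⟩ := exists_bound_of_neumann_radial_ode (by omega : 3 ≤ n) hR
  set σ := (n : ℝ) * volume.real (ball (0 : En n) 1)
  have hσ : 0 < σ := mul_pos (by exact_mod_cast (by omega : 0 < n))
    (ENNReal.toReal_pos (measure_ball_pos volume _ one_pos).ne' measure_ball_lt_top.ne)
  refine ⟨K / σ, div_pos hK hσ, ?_⟩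
  intro m u w hu hw hnn hru hrw hpde hneu hm x hx0 hxR
  set e : En n := EuclideanSpace.single ⟨0, by omega⟩ 1
  have he : ‖e‖ = 1 := by simp [e]
  have hre : ∀ r : ℝ, 0 ≤ r → ‖r • e‖ = r := fun r => norm_smul_of_norm_eq_one he
  set φ : ℝ → ℝ := fun r => w (r • e)
  set υ : ℝ → ℝ := fun r => u (r • e)
  have hφ : ContDiff ℝ 2 φ := hw.comp (contDiff_id.smul contDiff_const)
  have hode : ∀ r ∈ Ioo 0 R, deriv (deriv φ) r + (n - 1) / r * deriv φ r = φ r - υ r := by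
    intro r hr
    have h := hpde (r • e) (mem_ball_zero_iff.2 ((hre r hr.1.le).trans_lt hr.2))
    rw [hrw.lap_smul_eq hw he hr] at h
    linarith
  have hneuφ : deriv φ R = 0 := hrw.deriv_smul_eq_zero_of_inner_gradient
    (hw.differentiable (by norm_num)) he hR (hneu _ (hre R hR.le))
  have hmass : m = σ * ∫ s in 0..R, s ^ (n - 1) * υ s := by
    rw [← hm, hru.setIntegral_ball hR.le he]
  have hmem : ∀ s ∈ Icc 0 R, s • e ∈ closedBall (0 : En n) R := fun s hs =>
    mem_closedBall_zero_iff.2 (by rw [hre s hs.1]; exact hs.2)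
  have hrpow : ‖x‖ ^ ((n : ℝ) - 2) = ‖x‖ ^ (n - 2) := by
    rw [← Real.rpow_natCast, Nat.cast_sub (by omega : 2 ≤ n), Nat.cast_ofNat]
  calc w x + |inner ℝ x (gradient w x)| = φ ‖x‖ + ‖x‖ * |deriv φ ‖x‖| := by
        rw [hrw.apply_eq he hxR, hrw.inner_gradient (hw.differentiable (by norm_num)) he hxR,
          abs_mul, abs_norm]
    _ ≤ K * (∫ s in 0..R, s ^ (n - 1) * υ s) / ‖x‖ ^ (n - 2) :=
        hbound φ υ hφ (hu.comp (by fun_prop) hmem) (fun s hs => (hnn _ (hmem s hs)).symm) hode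
          hneuφ ‖x‖ ⟨hx0, hxR⟩
    _ = K / σ * m / ‖x‖ ^ ((n : ℝ) - 2) := by
        rw [hmass, hrpow]
        field_simp
end
end

section
/- Let θ ∈ (0,1), c > 0 and T′ > 0, and let F : [0,T′) → ℝ be continuous, differentiable on (0,T′), with F(0) < −c and F′(t) ≤ −((−F(t) − c)/c)^{1/θ} for all t ∈ (0,T′) at which −F(t) − c > 0. Then T′ ≤ θ c^{1/θ} / ((1−θ)(−F(0) − c)^{(1−θ)/θ}). -/
open Set

/-- **ODE comparison lemma for finite-time blowup.** Let `θ ∈ (0,1)`,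
`c > 0`, `T' > 0`, and let `F : [0,T') → ℝ` be continuous, differentiable
on `(0,T')`, with `F(0) < -c` and
`F'(t) ≤ -((-F(t) - c)/c)^{1/θ}` at every `t ∈ (0,T')` with `-F(t) - c > 0`.
Then `T' ≤ θ c^{1/θ} / ((1-θ)(-F(0) - c)^{(1-θ)/θ})`. -/
theorem ode_comparison_blowup
    (θ c T' : ℝ) (hθ : θ ∈ Ioo (0 : ℝ) 1) (hc : 0 < c) (hT : 0 < T')
    (F F' : ℝ → ℝ)
    (hcont : ContinuousOn F (Ico (0 : ℝ) T'))
    (hderiv : ∀ t ∈ Ioo (0 : ℝ) T', HasDerivAt F (F' t) t)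
    (h0 : F 0 < -c)
    (hineq : ∀ t ∈ Ioo (0 : ℝ) T', 0 < -F t - c →
      F' t ≤ -(((-F t - c) / c) ^ ((1 : ℝ) / θ))) :
    T' ≤ θ * c ^ ((1 : ℝ) / θ) / ((1 - θ) * (-F 0 - c) ^ ((1 - θ) / θ)) := by
  obtain ⟨hθ0, hθ1⟩ := hθ
  have hG0 : 0 < -F 0 - c := by linarith
  -- Step A: G t := -F t - c stays ≥ G 0 on [0, T')
  have hGpos : ∀ t ∈ Ico (0:ℝ) T', -F 0 - c ≤ -F t - c := by
    intro s hs
    by_contra hcon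
    push_neg at hcon
    have hs0 : 0 < s := by
      rcases eq_or_lt_of_le hs.1 with h | h
      · exact absurd hcon (by rw [← h]; exact lt_irrefl _)
      · exact h
    set m : ℝ := (max (-F s - c) 0 + (-F 0 - c)) / 2 with hmdef
    have hm0 : 0 < m := by
      have h1 : (0:ℝ) ≤ max (-F s - c) 0 := le_max_right _ _
      have : 0 < max (-F s - c) 0 + (-F 0 - c) := by linarith
      simpa [hmdef] using half_pos this
    have hmG0 : m < -F 0 - c := by
      have h1 : max (-F s - c) 0 < -F 0 - c := max_lt hcon hG0
      rw [hmdef]; linarith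
    have hms : -F s - c < m := by
      have h1 : -F s - c ≤ max (-F s - c) 0 := le_max_left _ _
      rw [hmdef]; linarith
    have hsub : Icc (0:ℝ) s ⊆ Ico 0 T' := fun x hx => ⟨hx.1, lt_of_le_of_lt hx.2 hs.2⟩
    have hGc : ContinuousOn (fun t => -F t - c) (Icc 0 s) :=
      ((hcont.mono hsub).neg.sub continuousOn_const)
    set S : Set ℝ := Icc 0 s ∩ (fun t => -F t - c) ⁻¹' Iic m with hSdef
    have hSclosed : IsClosed S := by
      apply ContinuousOn.preimage_isClosed_of_isClosed hGc isClosed_Icc isClosed_Iic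
    have hSne : S.Nonempty := ⟨s, ⟨le_of_lt hs0, le_refl _⟩, le_of_lt hms⟩
    have hSbdd : BddBelow S := ⟨0, fun x hx => hx.1.1⟩
    set u : ℝ := sInf S with hudef
    have huS : u ∈ S := hSclosed.csInf_mem hSne hSbdd
    have hu0 : 0 < u := by
      rcases eq_or_lt_of_le huS.1.1 with h | h
      · exfalso
        have : -F 0 - c ≤ m := by rw [h]; exact huS.2
        linarith
      · exact h
    have hus : u ≤ s := huS.1.2
    have hlt : ∀ t ∈ Ico (0:ℝ) u, m < -F t - c := by
      intro t ht
      by_contra hcon2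
      push_neg at hcon2
      have htS : t ∈ S := ⟨⟨ht.1, le_of_lt (lt_of_lt_of_le ht.2 hus)⟩, hcon2⟩
      exact absurd (csInf_le hSbdd htS) (not_le.mpr ht.2)
    obtain ⟨ξ, hξ, hξeq⟩ := exists_hasDerivAt_eq_slope F F' hu0
      (hcont.mono (fun x hx => ⟨hx.1, lt_of_le_of_lt (hx.2.trans hus) hs.2⟩))
      (fun x hx => hderiv x ⟨hx.1, lt_of_lt_of_le hx.2 (hus.trans (le_of_lt hs.2))⟩)
    have hξT : ξ ∈ Ioo (0:ℝ) T' := ⟨hξ.1, lt_of_lt_of_le hξ.2 (hus.trans (le_of_lt hs.2))⟩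
    have hGξ : 0 < -F ξ - c := lt_trans hm0 (hlt ξ ⟨le_of_lt hξ.1, hξ.2⟩)
    have hFle : F' ξ ≤ -(((-F ξ - c) / c) ^ ((1 : ℝ) / θ)) := hineq ξ hξT hGξ
    have hrnn : (0:ℝ) ≤ ((-F ξ - c) / c) ^ ((1 : ℝ) / θ) :=
      Real.rpow_nonneg (le_of_lt (div_pos hGξ hc)) _
    -- slope positive
    have hslope : 0 < (F u - F 0) / (u - 0) := by
      apply div_pos _ (by linarith)
      have h1 : -F u - c ≤ m := huS.2
      linarith
    rw [hξeq] at hFle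
    linarith
  -- Step B
  set p : ℝ := -((1 - θ) / θ) with hpdef
  have hp : p < 0 := by
    rw [hpdef]
    simp only [neg_neg, neg_lt, neg_zero]
    exact div_pos (by linarith) hθ0
  have hp1 : p - 1 = -(1/θ) := by rw [hpdef]; field_simp; ring
  have key : ∀ t ∈ Ioo (0:ℝ) T',
      t < θ * c ^ ((1 : ℝ) / θ) / ((1 - θ) * (-F 0 - c) ^ ((1 - θ) / θ)) := by
    intro t ht
    have hsub : Icc (0:ℝ) t ⊆ Ico 0 T' := fun x hx => ⟨hx.1, lt_of_le_of_lt hx.2 ht.2⟩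
    have hGposIcc : ∀ x ∈ Icc (0:ℝ) t, 0 < -F x - c :=
      fun x hx => lt_of_lt_of_le hG0 (hGpos x (hsub hx))
    have hHc : ContinuousOn (fun x => (-F x - c) ^ p) (Icc 0 t) := by
      apply ContinuousOn.rpow_const ((hcont.mono hsub).neg.sub continuousOn_const)
      exact fun x hx => Or.inl (ne_of_gt (hGposIcc x hx))
    have hHd : ∀ x ∈ Ioo (0:ℝ) t, HasDerivAt (fun x => (-F x - c) ^ p)
        ((-F' x) * p * (-F x - c) ^ (p - 1)) x := by
      intro x hx
      have hx' : x ∈ Ioo (0:ℝ) T' := ⟨hx.1, lt_trans hx.2 ht.2⟩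
      have hG : HasDerivAt (fun x => -F x - c) (-F' x) x :=
        ((hderiv x hx').neg).sub_const c
      exact hG.rpow_const (Or.inl (ne_of_gt (hGposIcc x ⟨le_of_lt hx.1, le_of_lt hx.2⟩)))
    obtain ⟨ξ, hξ, hξeq⟩ := exists_hasDerivAt_eq_slope (fun x => (-F x - c) ^ p)
      (fun x => (-F' x) * p * (-F x - c) ^ (p - 1)) ht.1 hHc hHd
    have hξT : ξ ∈ Ioo (0:ℝ) T' := ⟨hξ.1, lt_trans hξ.2 ht.2⟩
    have hGξ : 0 < -F ξ - c := hGposIcc ξ ⟨le_of_lt hξ.1, le_of_lt hξ.2⟩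
    have hF'ξ : ((-F ξ - c) / c) ^ ((1 : ℝ) / θ) ≤ -F' ξ := by
      have := hineq ξ hξT hGξ
      linarith
    -- key derivative bound: deriv ≤ p * c^(-(1/θ))
    have hprod : ((-F ξ - c) / c) ^ ((1:ℝ)/θ) * (-F ξ - c) ^ (p - 1) = c ^ (-(1/θ) : ℝ) := by
      rw [hp1, Real.div_rpow (le_of_lt hGξ) (le_of_lt hc), Real.rpow_neg (le_of_lt hGξ),
        Real.rpow_neg (le_of_lt hc)]
      field_simp
    have hGp1 : 0 < (-F ξ - c) ^ (p - 1) := Real.rpow_pos_of_pos hGξ _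
    have hderivle : (-F' ξ) * p * (-F ξ - c) ^ (p - 1) ≤ p * c ^ (-(1/θ) : ℝ) := by
      have h1 : ((-F ξ - c) / c) ^ ((1:ℝ)/θ) * (-F ξ - c) ^ (p - 1)
          ≤ (-F' ξ) * (-F ξ - c) ^ (p - 1) :=
        mul_le_mul_of_nonneg_right hF'ξ (le_of_lt hGp1)
      rw [hprod] at h1
      have h2 : -F' ξ * p * (-F ξ - c) ^ (p - 1)
          = p * (-F' ξ * (-F ξ - c) ^ (p - 1)) := by ring
      rw [h2]
      exact mul_le_mul_of_nonpos_left h1 (le_of_lt hp)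
    -- conclude t bound
    have hHt : (0:ℝ) < (-F t - c) ^ p :=
      Real.rpow_pos_of_pos (hGposIcc t ⟨le_of_lt ht.1, le_refl _⟩) _
    have hmean : ((-F t - c) ^ p - (-F 0 - c) ^ p) / (t - 0) ≤ p * c ^ (-(1/θ) : ℝ) := by
      rw [← hξeq]; exact hderivle
    rw [sub_zero, div_le_iff₀ ht.1] at hmean
    -- so  (-F t - c)^p ≤ (-F 0 - c)^p + p * c^(-(1/θ)) * t, LHS > 0
    have hbig : 0 < (-F 0 - c) ^ p + p * c ^ (-(1/θ) : ℝ) * t := by nlinarith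
    have hcp : c ^ (-(1/θ) : ℝ) = (c ^ ((1:ℝ)/θ))⁻¹ := by
      rw [Real.rpow_neg (le_of_lt hc)]
    have hG0p : (-F 0 - c) ^ p = ((-F 0 - c) ^ ((1 - θ)/θ))⁻¹ := by
      rw [hpdef, Real.rpow_neg (le_of_lt hG0)]
    have ha : 0 < c ^ ((1:ℝ)/θ) := Real.rpow_pos_of_pos hc _
    have hb : 0 < (-F 0 - c) ^ ((1 - θ)/θ) := Real.rpow_pos_of_pos hG0 _
    rw [hG0p, hcp, hpdef] at hbig
    set a := c ^ ((1:ℝ)/θ)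
    set b := (-F 0 - c) ^ ((1 - θ)/θ)
    rw [lt_div_iff₀ (mul_pos (by linarith : (0:ℝ) < 1 - θ) hb)]
    have h2 : (1 - θ) / θ * a⁻¹ * t < b⁻¹ := by linarith
    have ha' : a ≠ 0 := ne_of_gt ha
    have hb' : b ≠ 0 := ne_of_gt hb
    have hθ' : θ ≠ 0 := ne_of_gt hθ0
    have h3 : (1 - θ) / θ * a⁻¹ * t * (θ * a * b) < b⁻¹ * (θ * a * b) :=
      mul_lt_mul_of_pos_right h2 (by positivity)
    have e1 : (1 - θ) / θ * a⁻¹ * t * (θ * a * b) = t * ((1 - θ) * b) := by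
      field_simp
    have e2 : b⁻¹ * (θ * a * b) = θ * a := by
      field_simp
    rw [e1, e2] at h3
    exact h3
  -- conclude
  by_contra hcon
  push_neg at hcon
  set B := θ * c ^ ((1 : ℝ) / θ) / ((1 - θ) * (-F 0 - c) ^ ((1 - θ) / θ)) with hB
  set t := (max B 0 + T') / 2 with htdef
  have h1 : max B 0 < T' := max_lt hcon hT
  have h2 : max B 0 < t := by rw [htdef]; linarith
  have h3 : t < T' := by rw [htdef]; linarith [le_max_right B 0]
  have h4 : 0 < t := lt_of_le_of_lt (le_max_right B 0) h2
  have := key t ⟨h4, h3⟩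
  have h5 : B ≤ max B 0 := le_max_left _ _
  linarith
end

section
/- Let n ≥ 5, R > 0, Ω = B_R ⊂ ℝⁿ, and γ > 0. Let φ ∈ C_c^∞(ℝⁿ) be nonnegative, radially symmetric, supported in the unit ball B₁, with ∫_{ℝⁿ} φ = 1 and φ(x) ≤ φ(0) for all x. Let u₀ ∈ C⁰(Ω̄) be positive with ι := min_{Ω̄} u₀ > 0 and m := ∫_Ω u₀ dx. For η ∈ (0, min{1,R}) define u_η(x) := u₀(x) + (ln(1/η))^{2γ} η^{−n/2−2} φ(x/η) − (ln(1/η))^{2γ} η^{n/2−2}/|Ω| on Ω̄. If η^{n/2−2}(ln(1/η))^{2γ} < |Ω| ι and 2 η^{n/2−2}(ln(1/η))^{2γ} < 1, then u_η > 0 on Ω̄ and ∫_Ω u_η ln u_η dx ≤ ∫_Ω u₀ ln u₀ dx + sup_{Ω̄} |ln u₀| + m ( n ln(1/η) + ln(1 + φ(0)/ι) ). -/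
open MeasureTheory Metric Set

noncomputable section

/-- **Entropy estimate for the perturbed initial data.** Let `n ≥ 5`,
`R > 0`, `Ω = B_R ⊂ ℝⁿ`, `γ > 0`, and let `φ ∈ C_c^∞(ℝⁿ)` be nonnegative,
radially symmetric, supported in `B₁`, with `∫ φ = 1` and `φ(x) ≤ φ(0)`.
Let `u₀ ∈ C⁰(Ω̄)` be positive with minimum `ι > 0` and mass `m`. For
`η ∈ (0, min{1,R})` define
`u_η(x) := u₀(x) + (ln(1/η))^{2γ} η^{-n/2-2} φ(x/η) - (ln(1/η))^{2γ} η^{n/2-2}/|Ω|`.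
If `η^{n/2-2}(ln(1/η))^{2γ} < |Ω|ι` and `2η^{n/2-2}(ln(1/η))^{2γ} < 1`, then
`u_η > 0` on `Ω̄` and
`∫_Ω u_η ln u_η ≤ ∫_Ω u₀ ln u₀ + sup_Ω̄ |ln u₀| + m(n ln(1/η) + ln(1 + φ(0)/ι))`. -/
theorem entropy_estimate_perturbed_data
    (n : ℕ) (hn : 5 ≤ n) (R γ : ℝ) (hR : 0 < R) (hγ : 0 < γ)
    (φ : En n → ℝ) (hφsmooth : ContDiff ℝ (⊤ : ℕ∞) φ) (hφcpt : HasCompactSupport φ)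
    (hφ0 : ∀ x, 0 ≤ φ x)
    (hφrad : ∀ x y : En n, ‖x‖ = ‖y‖ → φ x = φ y)
    (hφsupp : ∀ x : En n, 1 ≤ ‖x‖ → φ x = 0)
    (hφint : (∫ x : En n, φ x) = 1)
    (hφmax : ∀ x, φ x ≤ φ 0)
    (u₀ : En n → ℝ) (hu₀ : ContinuousOn u₀ (closedBall (0 : En n) R))
    (hu₀pos : ∀ x ∈ closedBall (0 : En n) R, 0 < u₀ x)
    (ι : ℝ) (hι : IsLeast (u₀ '' closedBall (0 : En n) R) ι)
    (m : ℝ) (hm : (∫ x in ball (0 : En n) R, u₀ x) = m)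
    (η : ℝ) (hη0 : 0 < η) (hη1 : η < min 1 R)
    (hsmall1 : η ^ ((n : ℝ) / 2 - 2) * Real.log (1 / η) ^ (2 * γ) <
      (volume (ball (0 : En n) R)).toReal * ι)
    (hsmall2 : 2 * (η ^ ((n : ℝ) / 2 - 2) * Real.log (1 / η) ^ (2 * γ)) < 1)
    (uη : En n → ℝ)
    (huη : uη = fun x => u₀ x +
      Real.log (1 / η) ^ (2 * γ) * η ^ (-(n : ℝ) / 2 - 2) * φ (η⁻¹ • x) -
      Real.log (1 / η) ^ (2 * γ) * η ^ ((n : ℝ) / 2 - 2) /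
        (volume (ball (0 : En n) R)).toReal) :
    (∀ x ∈ closedBall (0 : En n) R, 0 < uη x) ∧
    (∫ x in ball (0 : En n) R, uη x * Real.log (uη x)) ≤
      (∫ x in ball (0 : En n) R, u₀ x * Real.log (u₀ x)) +
      sSup ((fun x => |Real.log (u₀ x)|) '' closedBall (0 : En n) R) +
      m * ((n : ℝ) * Real.log (1 / η) + Real.log (1 + φ 0 / ι)) := by
  have hη1' : η < 1 := lt_of_lt_of_le hη1 (min_le_left _ _)
  have hηR : η < R := lt_of_lt_of_le hη1 (min_le_right _ _)
  have hlog : 0 < Real.log (1 / η) := Real.log_pos (by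
    rw [one_div]; exact (one_lt_inv₀ hη0).2 hη1')
  set A := Real.log (1 / η) ^ (2 * γ) with hAdef
  have hA : 0 < A := Real.rpow_pos_of_pos hlog _
  set P := η ^ ((n : ℝ) / 2 - 2) with hPdef
  have hP : 0 < P := Real.rpow_pos_of_pos hη0 _
  set Q := η ^ (-(n : ℝ) / 2 - 2) with hQdef
  have hQ : 0 < Q := Real.rpow_pos_of_pos hη0 _
  set V := (volume (ball (0 : En n) R)).toReal with hVdef
  have hV : 0 < V :=
    ENNReal.toReal_pos (measure_ball_pos volume _ hR).ne' measure_ball_lt_top.ne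
  have hηn : (0:ℝ) < η ^ (-(n:ℝ)) := Real.rpow_pos_of_pos hη0 _
  have hQP : Q = P * η ^ (-(n:ℝ)) := by
    rw [hPdef, hQdef, ← Real.rpow_add hη0]; congr 1; ring
  have hPQ : P = Q * η ^ (n:ℝ) := by
    rw [hQdef, hPdef, ← Real.rpow_add hη0]; congr 1; ring
  have hηninv : (1:ℝ) ≤ η ^ (-(n:ℝ)) := by
    calc (1:ℝ) = η ^ (0:ℝ) := (Real.rpow_zero η).symm
      _ ≤ η ^ (-(n:ℝ)) := Real.rpow_le_rpow_of_exponent_ge hη0 hη1'.le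
          (neg_nonpos.2 (Nat.cast_nonneg n))
  have hι0 : 0 < ι := by
    obtain ⟨x₀, hx₀, he⟩ := hι.1
    exact he ▸ hu₀pos x₀ hx₀
  have hιle : ∀ x ∈ closedBall (0:En n) R, ι ≤ u₀ x := fun x hx => hι.2 ⟨x, hx, rfl⟩
  have hcι : A * P / V < ι := by
    rw [div_lt_iff₀ hV, mul_comm A P, mul_comm ι V]; exact hsmall1
  have hAP1 : A * P ≤ 1 := by nlinarith
  -- positivity
  have hpos : ∀ x ∈ closedBall (0:En n) R, 0 < uη x := by
    intro x hx
    have h1 : 0 ≤ A * Q * φ (η⁻¹ • x) := mul_nonneg (mul_nonneg hA.le hQ.le) (hφ0 _)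
    have h2 := hιle x hx
    rw [huη]
    dsimp only
    linarith [hcι]
  refine ⟨hpos, ?_⟩
  -- continuity
  have contφη : Continuous fun x : En n => φ (η⁻¹ • x) :=
    hφsmooth.continuous.comp (continuous_const_smul _)
  have hKc : IsCompact (closedBall (0:En n) R) := isCompact_closedBall _ _
  have cont_uη : ContinuousOn uη (closedBall (0:En n) R) := by
    rw [huη]
    exact (hu₀.add ((continuous_const.mul contφη).continuousOn)).sub continuousOn_const
  have hne : ∀ x ∈ closedBall (0:En n) R, uη x ≠ 0 := fun x hx => (hpos x hx).ne'
  have contlogu₀ : ContinuousOn (fun x => Real.log (u₀ x)) (closedBall (0:En n) R) :=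
    hu₀.log (fun x hx => (hu₀pos x hx).ne')
  have hBK : ball (0:En n) R ⊆ closedBall 0 R := ball_subset_closedBall
  have int_of : ∀ f : En n → ℝ, ContinuousOn f (closedBall (0:En n) R) →
      IntegrableOn f (ball (0:En n) R) volume := fun f hf =>
    (hf.integrableOn_compact hKc).mono_set hBK
  set L := (n:ℝ) * Real.log (1 / η) + Real.log (1 + φ 0 / ι) with hLdef
  have Iφη : IntegrableOn (fun x => φ (η⁻¹ • x)) (ball (0:En n) R) volume :=
    int_of _ contφη.continuousOn
  have Iu₀ : IntegrableOn u₀ (ball (0:En n) R) volume := int_of _ hu₀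
  have Iuη : IntegrableOn uη (ball (0:En n) R) volume := int_of _ cont_uη
  have Iuηlog : IntegrableOn (fun x => uη x * Real.log (uη x)) (ball (0:En n) R) volume :=
    int_of _ (cont_uη.mul (cont_uη.log hne))
  have Icomb : IntegrableOn (fun x => uη x * (Real.log (u₀ x) + L)) (ball (0:En n) R) volume :=
    int_of _ (cont_uη.mul (contlogu₀.add continuousOn_const))
  have Iuηlogu₀ : IntegrableOn (fun x => uη x * Real.log (u₀ x)) (ball (0:En n) R) volume :=
    int_of _ (cont_uη.mul contlogu₀)
  have Iu₀logu₀ : IntegrableOn (fun x => u₀ x * Real.log (u₀ x)) (ball (0:En n) R) volume :=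
    int_of _ (hu₀.mul contlogu₀)
  have Idiff : IntegrableOn (fun x => (uη x - u₀ x) * Real.log (u₀ x)) (ball (0:En n) R) volume :=
    int_of _ ((cont_uη.sub hu₀).mul contlogu₀)
  have Iconst : IntegrableOn (fun _ : En n => A * P / V) (ball (0:En n) R) volume :=
    integrableOn_const measure_ball_lt_top.ne
  -- integral of φ(η⁻¹ • x)
  have hφball : (∫ x in ball (0:En n) R, φ (η⁻¹ • x)) = η ^ (n:ℝ) := by
    rw [setIntegral_eq_integral_of_forall_compl_eq_zero]
    · rw [Measure.integral_comp_smul volume φ η⁻¹, hφint, smul_eq_mul, mul_one,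
        finrank_euclideanSpace_fin, ← inv_pow, inv_inv,
        abs_of_nonneg (pow_nonneg hη0.le n), ← Real.rpow_natCast]
    · intro x hx
      apply hφsupp
      have hxR : R ≤ ‖x‖ := not_lt.1 (fun h => hx (mem_ball_zero_iff.2 h))
      have hηx : η ≤ ‖x‖ := le_trans hηR.le hxR
      rw [norm_smul, norm_inv, Real.norm_eq_abs, abs_of_pos hη0]
      calc (1:ℝ) = η⁻¹ * η := (inv_mul_cancel₀ hη0.ne').symm
        _ ≤ η⁻¹ * ‖x‖ := mul_le_mul_of_nonneg_left hηx (inv_nonneg.2 hη0.le)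
  -- mass
  have hmass : (∫ x in ball (0:En n) R, uη x) = m := by
    rw [huη]
    have IB : IntegrableOn (fun x => A * Q * φ (η⁻¹ • x)) (ball (0:En n) R) volume :=
      Iφη.const_mul _
    have IA : IntegrableOn (fun x => u₀ x + A * Q * φ (η⁻¹ • x)) (ball (0:En n) R) volume :=
      Iu₀.add IB
    rw [integral_sub IA Iconst,
      integral_add Iu₀ IB, hm, integral_const_mul, hφball,
      setIntegral_const, smul_eq_mul, measureReal_def, ← hVdef]
    have e1 : A * Q * η ^ (n:ℝ) = A * P := by rw [hPQ]; ring
    have e2 : V * (A * P / V) = A * P := by field_simp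
    linarith
  -- sSup facts
  set S := sSup ((fun x => |Real.log (u₀ x)|) '' closedBall (0:En n) R) with hSdef
  have hbdd : BddAbove ((fun x => |Real.log (u₀ x)|) '' closedBall (0:En n) R) :=
    (hKc.image_of_continuousOn contlogu₀.abs).bddAbove
  have hSle : ∀ x ∈ closedBall (0:En n) R, |Real.log (u₀ x)| ≤ S :=
    fun x hx => le_csSup hbdd ⟨x, hx, rfl⟩
  have hS0 : 0 ≤ S := le_trans (abs_nonneg _) (hSle 0 (mem_closedBall_self hR.le))
  -- pointwise log bound
  have h1φι : (0:ℝ) < 1 + φ 0 / ι :=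
    add_pos_of_pos_of_nonneg one_pos (div_nonneg (hφ0 0) hι0.le)
  have hlogbd : ∀ x ∈ closedBall (0:En n) R, Real.log (uη x) ≤ Real.log (u₀ x) + L := by
    intro x hx
    have hu0x := hu₀pos x hx
    have h3 : ι ≤ u₀ x := hιle x hx
    have hux : uη x ≤ u₀ x * (η ^ (-(n:ℝ)) * (1 + φ 0 / ι)) := by
      rw [huη]
      dsimp only
      have h1 : φ (η⁻¹ • x) ≤ φ 0 := hφmax _
      have h2 : 0 ≤ φ (η⁻¹ • x) := hφ0 _
      have hc : 0 < A * P / V := by positivity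
      have e1 : u₀ x ≤ u₀ x * η ^ (-(n:ℝ)) := le_mul_of_one_le_right hu0x.le hηninv
      have e2 : A * Q * φ (η⁻¹ • x) ≤ η ^ (-(n:ℝ)) * φ 0 := by
        rw [hQP]
        calc A * (P * η ^ (-(n:ℝ))) * φ (η⁻¹ • x)
            ≤ A * (P * η ^ (-(n:ℝ))) * φ 0 := by
              apply mul_le_mul_of_nonneg_left h1; positivity
          _ = (A * P) * (η ^ (-(n:ℝ)) * φ 0) := by ring
          _ ≤ 1 * (η ^ (-(n:ℝ)) * φ 0) :=
              mul_le_mul_of_nonneg_right hAP1 (mul_nonneg hηn.le (hφ0 0))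
          _ = η ^ (-(n:ℝ)) * φ 0 := one_mul _
      have e3 : η ^ (-(n:ℝ)) * φ 0 ≤ u₀ x * (η ^ (-(n:ℝ)) * (φ 0 / ι)) := by
        have h4 : 1 ≤ u₀ x * ι⁻¹ := by
          rw [← div_eq_mul_inv, le_div_iff₀ hι0, one_mul]; exact h3
        calc η ^ (-(n:ℝ)) * φ 0 = 1 * (η ^ (-(n:ℝ)) * φ 0) := (one_mul _).symm
          _ ≤ (u₀ x * ι⁻¹) * (η ^ (-(n:ℝ)) * φ 0) :=
              mul_le_mul_of_nonneg_right h4 (mul_nonneg hηn.le (hφ0 0))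
          _ = u₀ x * (η ^ (-(n:ℝ)) * (φ 0 / ι)) := by rw [div_eq_mul_inv]; ring
      have expand : u₀ x * (η ^ (-(n:ℝ)) * (1 + φ 0 / ι)) =
          u₀ x * η ^ (-(n:ℝ)) + u₀ x * (η ^ (-(n:ℝ)) * (φ 0 / ι)) := by ring
      linarith
    calc Real.log (uη x)
        ≤ Real.log (u₀ x * (η ^ (-(n:ℝ)) * (1 + φ 0 / ι))) :=
          Real.log_le_log (hpos x hx) hux
      _ = Real.log (u₀ x) + (Real.log (η ^ (-(n:ℝ))) + Real.log (1 + φ 0 / ι)) := by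
          rw [Real.log_mul hu0x.ne' (by positivity), Real.log_mul (by positivity) h1φι.ne']
      _ = Real.log (u₀ x) + L := by
          rw [Real.log_rpow hη0, hLdef, one_div, Real.log_inv]; ring
  -- step 1
  have step1 : (∫ x in ball (0:En n) R, uη x * Real.log (uη x)) ≤
      ∫ x in ball (0:En n) R, uη x * (Real.log (u₀ x) + L) :=
    setIntegral_mono_on Iuηlog Icomb measurableSet_ball
      (fun x hx => mul_le_mul_of_nonneg_left (hlogbd x (hBK hx)) (hpos x (hBK hx)).le)
  -- step 2
  have step2 : (∫ x in ball (0:En n) R, uη x * (Real.log (u₀ x) + L)) =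
      (∫ x in ball (0:En n) R, uη x * Real.log (u₀ x)) + m * L := by
    simp_rw [mul_add]
    rw [integral_add Iuηlogu₀ (Iuη.mul_const L), integral_mul_const, hmass]
  -- step 3
  have hdiff_eq : ∀ x, uη x - u₀ x = A * Q * φ (η⁻¹ • x) - A * P / V := by
    intro x; simp only [huη]; ring
  have Irhs : IntegrableOn (fun x => (A * Q * φ (η⁻¹ • x) + A * P / V) * S)
      (ball (0:En n) R) volume := ((Iφη.const_mul _).add Iconst).mul_const _
  have step3 : (∫ x in ball (0:En n) R, (uη x - u₀ x) * Real.log (u₀ x)) ≤ S := by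
    have hptwise : ∀ x ∈ ball (0:En n) R,
        (uη x - u₀ x) * Real.log (u₀ x) ≤ (A * Q * φ (η⁻¹ • x) + A * P / V) * S := by
      intro x hx
      have hxK := hBK hx
      have hb : 0 ≤ A * Q * φ (η⁻¹ • x) := mul_nonneg (mul_nonneg hA.le hQ.le) (hφ0 _)
      have hc : 0 ≤ A * P / V := by positivity
      have h1 : |uη x - u₀ x| ≤ A * Q * φ (η⁻¹ • x) + A * P / V := by
        rw [hdiff_eq x]
        exact abs_le.2 ⟨by linarith, by linarith⟩
      calc (uη x - u₀ x) * Real.log (u₀ x) ≤ |(uη x - u₀ x) * Real.log (u₀ x)| := le_abs_self _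
        _ = |uη x - u₀ x| * |Real.log (u₀ x)| := abs_mul _ _
        _ ≤ (A * Q * φ (η⁻¹ • x) + A * P / V) * S :=
            mul_le_mul h1 (hSle x hxK) (abs_nonneg _) (le_trans (abs_nonneg _) h1)
    have hrhs : (∫ x in ball (0:En n) R, (A * Q * φ (η⁻¹ • x) + A * P / V) * S) =
        (2 * (A * P)) * S := by
      rw [integral_mul_const, integral_add (Iφη.const_mul _) Iconst,
        integral_const_mul, hφball, setIntegral_const, smul_eq_mul, measureReal_def, ← hVdef]
      have e1 : A * Q * η ^ (n:ℝ) = A * P := by rw [hPQ]; ring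
      have e2 : V * (A * P / V) = A * P := by field_simp
      rw [e1, e2]; ring
    calc (∫ x in ball (0:En n) R, (uη x - u₀ x) * Real.log (u₀ x))
        ≤ ∫ x in ball (0:En n) R, (A * Q * φ (η⁻¹ • x) + A * P / V) * S :=
          setIntegral_mono_on Idiff Irhs measurableSet_ball hptwise
      _ = (2 * (A * P)) * S := hrhs
      _ ≤ 1 * S := by
          apply mul_le_mul_of_nonneg_right _ hS0
          have hc := mul_comm A P
          linarith
      _ = S := one_mul S
  have split : (∫ x in ball (0:En n) R, uη x * Real.log (u₀ x)) =
      (∫ x in ball (0:En n) R, u₀ x * Real.log (u₀ x)) +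
      ∫ x in ball (0:En n) R, (uη x - u₀ x) * Real.log (u₀ x) := by
    rw [← integral_add Iu₀logu₀ Idiff]
    exact integral_congr_ae (Filter.Eventually.of_forall fun x => by ring)
  calc (∫ x in ball (0:En n) R, uη x * Real.log (uη x))
      ≤ ∫ x in ball (0:En n) R, uη x * (Real.log (u₀ x) + L) := step1
    _ = (∫ x in ball (0:En n) R, uη x * Real.log (u₀ x)) + m * L := step2
    _ = ((∫ x in ball (0:En n) R, u₀ x * Real.log (u₀ x)) +
        ∫ x in ball (0:En n) R, (uη x - u₀ x) * Real.log (u₀ x)) + m * L := by rw [split]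
    _ ≤ (∫ x in ball (0:En n) R, u₀ x * Real.log (u₀ x)) + S + m * L := by linarith
end
end

section
/- Let n ≥ 5, R > 0, Ω = B_R ⊂ ℝⁿ, and γ > 0. Let φ ∈ C_c^∞(ℝⁿ) be nonnegative, radially symmetric, supported in the unit ball B₁, with ∫_{ℝⁿ} φ = 1. Let u₀ ∈ C⁰(Ω̄) be positive with ι := min_{Ω̄} u₀ > 0, and let v₀ ∈ C⁰(Ω̄) be nonnegative. For η ∈ (0, min{1,R}) define u_η(x) := u₀(x) + (ln(1/η))^{2γ} η^{−n/2−2} φ(x/η) − (ln(1/η))^{2γ} η^{n/2−2}/|Ω| and v_η(x) := v₀(x) + (ln(1/η))^{−γ} η^{2−n/2} φ(x/η) on Ω̄. If η^{n/2−2}(ln(1/η))^{2γ} < |Ω| ι, then ∫_Ω u_η v_η dx ≥ (ln(1/η))^{γ} ∫_{B₁} φ² dx. -/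
open MeasureTheory Metric Set

noncomputable section

/-- **Lower bound on the mixed term for the perturbed initial data.** Let
`n ≥ 5`, `R > 0`, `Ω = B_R ⊂ ℝⁿ`, `γ > 0`, and let `φ ∈ C_c^∞(ℝⁿ)` be
nonnegative, radially symmetric, supported in `B₁`, with `∫ φ = 1`. Let
`u₀ ∈ C⁰(Ω̄)` be positive with minimum `ι > 0`, and `v₀ ∈ C⁰(Ω̄)`
nonnegative. For `η ∈ (0, min{1,R})` define
`u_η(x) := u₀(x) + (ln(1/η))^{2γ} η^{-n/2-2} φ(x/η) - (ln(1/η))^{2γ} η^{n/2-2}/|Ω|`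
and `v_η(x) := v₀(x) + (ln(1/η))^{-γ} η^{2-n/2} φ(x/η)`. If
`η^{n/2-2}(ln(1/η))^{2γ} < |Ω|ι`, then
`∫_Ω u_η v_η ≥ (ln(1/η))^γ ∫_{B₁} φ²`. -/
theorem mixed_term_lower_bound_perturbed_data
    (n : ℕ) (hn : 5 ≤ n) (R γ : ℝ) (hR : 0 < R) (hγ : 0 < γ)
    (φ : En n → ℝ) (hφsmooth : ContDiff ℝ (⊤ : ℕ∞) φ) (hφcpt : HasCompactSupport φ)
    (hφ0 : ∀ x, 0 ≤ φ x)
    (hφrad : ∀ x y : En n, ‖x‖ = ‖y‖ → φ x = φ y)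
    (hφsupp : ∀ x : En n, 1 ≤ ‖x‖ → φ x = 0)
    (hφint : (∫ x : En n, φ x) = 1)
    (u₀ : En n → ℝ) (hu₀ : ContinuousOn u₀ (closedBall (0 : En n) R))
    (hu₀pos : ∀ x ∈ closedBall (0 : En n) R, 0 < u₀ x)
    (ι : ℝ) (hι : IsLeast (u₀ '' closedBall (0 : En n) R) ι)
    (v₀ : En n → ℝ) (hv₀ : ContinuousOn v₀ (closedBall (0 : En n) R))
    (hv₀nonneg : ∀ x ∈ closedBall (0 : En n) R, 0 ≤ v₀ x)
    (η : ℝ) (hη0 : 0 < η) (hη1 : η < min 1 R)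
    (hsmall : η ^ ((n : ℝ) / 2 - 2) * Real.log (1 / η) ^ (2 * γ) <
      (volume (ball (0 : En n) R)).toReal * ι)
    (uη vη : En n → ℝ)
    (huη : uη = fun x => u₀ x +
      Real.log (1 / η) ^ (2 * γ) * η ^ (-(n : ℝ) / 2 - 2) * φ (η⁻¹ • x) -
      Real.log (1 / η) ^ (2 * γ) * η ^ ((n : ℝ) / 2 - 2) /
        (volume (ball (0 : En n) R)).toReal)
    (hvη : vη = fun x => v₀ x +
      Real.log (1 / η) ^ (-γ) * η ^ (2 - (n : ℝ) / 2) * φ (η⁻¹ • x)) :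
    (∫ x in ball (0 : En n) R, uη x * vη x) ≥
      Real.log (1 / η) ^ γ * ∫ x in ball (0 : En n) 1, (φ x) ^ 2 := by

  have hη1' : η < 1 := lt_of_lt_of_le hη1 (min_le_left _ _)
  have hηR : η < R := lt_of_lt_of_le hη1 (min_le_right _ _)
  have hL : 0 < Real.log (1 / η) := Real.log_pos (one_lt_one_div hη0 hη1')
  set L := Real.log (1 / η) with hLdef
  set Ωv := (volume (ball (0 : En n) R)).toReal with hΩ
  have hΩpos : 0 < Ωv := by
    rw [hΩ]
    exact ENNReal.toReal_pos (measure_ball_pos volume 0 hR).ne' measure_ball_lt_top.ne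
  set a := L ^ (2 * γ) * η ^ (-(n : ℝ) / 2 - 2) with ha
  set c := L ^ (-γ) * η ^ (2 - (n : ℝ) / 2) with hc
  have hapos : 0 < a := mul_pos (Real.rpow_pos_of_pos hL _) (Real.rpow_pos_of_pos hη0 _)
  have hcpos : 0 < c := mul_pos (Real.rpow_pos_of_pos hL _) (Real.rpow_pos_of_pos hη0 _)
  have hbι : L ^ (2 * γ) * η ^ ((n : ℝ) / 2 - 2) / Ωv < ι := by
    rw [div_lt_iff₀ hΩpos]
    nlinarith [hsmall]
  have hφc : Continuous φ := hφsmooth.continuous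
  have hψc : Continuous fun x : En n => φ (η⁻¹ • x) := hφc.comp (continuous_const_smul _)
  -- pointwise bound
  have key : ∀ x ∈ ball (0 : En n) R, a * c * (φ (η⁻¹ • x)) ^ 2 ≤ uη x * vη x := by
    intro x hx
    have hx' : x ∈ closedBall (0 : En n) R := ball_subset_closedBall hx
    have hι' : ι ≤ u₀ x := hι.2 ⟨x, hx', rfl⟩
    have hφx : 0 ≤ φ (η⁻¹ • x) := hφ0 _
    have h1 : a * φ (η⁻¹ • x) ≤ uη x := by
      rw [huη]
      have : L ^ (2 * γ) * η ^ ((n : ℝ) / 2 - 2) / Ωv ≤ u₀ x := le_of_lt (lt_of_lt_of_le hbι hι')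
      simp only [← ha]
      linarith
    have h2 : c * φ (η⁻¹ • x) ≤ vη x := by
      rw [hvη]
      have := hv₀nonneg x hx'
      simp only [← hc]
      linarith
    calc a * c * (φ (η⁻¹ • x)) ^ 2 = (a * φ (η⁻¹ • x)) * (c * φ (η⁻¹ • x)) := by ring
      _ ≤ uη x * vη x :=
        mul_le_mul h1 h2 (by positivity) (le_trans (by positivity) h1)
  -- integrability
  have hIntUV : IntegrableOn (fun x => uη x * vη x) (ball (0 : En n) R) := by
    have huc : ContinuousOn uη (closedBall (0 : En n) R) := by
      rw [huη]
      exact (hu₀.add ((continuous_const.mul hψc).continuousOn)).sub continuousOn_const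
    have hvc : ContinuousOn vη (closedBall (0 : En n) R) := by
      rw [hvη]
      exact hv₀.add ((continuous_const.mul hψc).continuousOn)
    exact ((huc.mul hvc).integrableOn_compact (isCompact_closedBall _ _)).mono_set
      ball_subset_closedBall
  have hIntG : IntegrableOn (fun x => a * c * (φ (η⁻¹ • x)) ^ 2) (ball (0 : En n) R) :=
    (((continuous_const.mul (hψc.pow 2)).continuousOn).integrableOn_compact
      (isCompact_closedBall _ _)).mono_set ball_subset_closedBall
  have hmono : (∫ x in ball (0 : En n) R, a * c * (φ (η⁻¹ • x)) ^ 2) ≤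
      ∫ x in ball (0 : En n) R, uη x * vη x :=
    setIntegral_mono_on hIntG hIntUV measurableSet_ball key
  -- the scaled bump vanishes outside the ball of radius R
  have hsuppζ : ∀ x : En n, x ∉ ball (0 : En n) R → (φ (η⁻¹ • x)) ^ 2 = 0 := by
    intro x hx
    have hxR : R ≤ ‖x‖ := by simpa [mem_ball, dist_zero_right, not_lt] using hx
    have h1 : (1 : ℝ) ≤ ‖η⁻¹ • x‖ := by
      rw [norm_smul, norm_inv, Real.norm_eq_abs, abs_of_pos hη0, inv_mul_eq_div, le_div_iff₀ hη0]
      nlinarith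
    rw [hφsupp _ h1]
    ring
  have hEq1 : (∫ x in ball (0 : En n) R, a * c * (φ (η⁻¹ • x)) ^ 2) =
      a * c * ∫ x : En n, (φ (η⁻¹ • x)) ^ 2 := by
    rw [integral_const_mul, setIntegral_eq_integral_of_forall_compl_eq_zero hsuppζ]
  have hdim : Module.finrank ℝ (En n) = n := finrank_euclideanSpace_fin
  have hEq2 : (∫ x : En n, (φ (η⁻¹ • x)) ^ 2) = η ^ n * ∫ x : En n, (φ x) ^ 2 := by
    rw [Measure.integral_comp_inv_smul volume (fun x => (φ x) ^ 2) η, hdim,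
      abs_of_pos (pow_pos hη0 n), smul_eq_mul]
  have hEq3 : (∫ x in ball (0 : En n) 1, (φ x) ^ 2) = ∫ x : En n, (φ x) ^ 2 := by
    refine setIntegral_eq_integral_of_forall_compl_eq_zero fun x hx => ?_
    have hx1 : (1 : ℝ) ≤ ‖x‖ := by simpa [mem_ball, dist_zero_right, not_lt] using hx
    rw [hφsupp _ hx1]; ring
  have hac : a * c * η ^ n = L ^ γ := by
    rw [ha, hc]
    have h1 : L ^ (2 * γ) * η ^ (-(n : ℝ) / 2 - 2) * (L ^ (-γ) * η ^ (2 - (n : ℝ) / 2)) =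
        (L ^ (2 * γ) * L ^ (-γ)) * (η ^ (-(n : ℝ) / 2 - 2) * η ^ (2 - (n : ℝ) / 2)) := by ring
    rw [h1, ← Real.rpow_add hL, ← Real.rpow_add hη0]
    have h2 : (2 * γ + -γ) = γ := by ring
    have h3 : (-(n : ℝ) / 2 - 2 + (2 - (n : ℝ) / 2)) = -(n : ℝ) := by ring
    rw [h2, h3]
    rw [Real.rpow_neg hη0.le, ← Real.rpow_natCast η n]
    field_simp
  have hint2nonneg : 0 ≤ ∫ x : En n, (φ x) ^ 2 :=
    integral_nonneg fun x => sq_nonneg _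
  calc L ^ γ * ∫ x in ball (0 : En n) 1, (φ x) ^ 2
      = a * c * (η ^ n * ∫ x : En n, (φ x) ^ 2) := by rw [hEq3, ← hac]; ring
    _ = ∫ x in ball (0 : En n) R, a * c * (φ (η⁻¹ • x)) ^ 2 := by rw [hEq1, hEq2]
    _ ≤ ∫ x in ball (0 : En n) R, uη x * vη x := hmono
end
end
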